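/- Let V be a finite set of N nodes partitioned into two sensitive groups S₀ and S₁ of sizes N₀ ≥ 1 and N₁ ≥ 1, with features X : V → ℝ^d and iterates F⁽ᵏ⁾ produced by the fairness-aware message passing, and let Δᵏ ∈ ℝ^d be the componentwise maximal deviation of F⁽ᵏ⁾ from its overall mean. Then ‖Δ²‖ ≤ ((2 + 4/N₀ + 4/N₁)² + 6 + 8/N₀ + 8/N₁)·‖Δ⁰‖. -/

import Mathlib

open Matrix Finset

/-- RBF kernel `k(x,y) = exp(-α‖x-y‖²)`. -/
noncomputable def ker {d : ℕ} (α : ℝ) (x y : EuclideanSpace ℝ (Fin d)) : ℝ :=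
  Real.exp (-α * ‖x - y‖ ^ 2)

/-- The sensitive group `S_b`, where group membership is given by `grp`
(`false` encodes `S₀` and `true` encodes `S₁`). -/
def sgrp {V : Type*} [Fintype V] (grp : V → Bool) (b : Bool) : Finset V :=
  Finset.univ.filter (fun i => grp i = b)

/-- Fairness-aware message passing: `F 0 = X`, and each layer `k ≥ 1` updates node `i`
(lying in group `grp i`, with opposite group `!grp i`) by
`F⁽ᵏ⁾_i = X_i + (1/|N(i)|)·Σ_{u∈N(i)} F⁽ᵏ⁻¹⁾_u
       − (1/N_t²)·Σ_{u∈S_t} k(F⁽ᵏ⁻¹⁾_u,F⁽ᵏ⁻¹⁾_i)·F⁽ᵏ⁻¹⁾_u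
       + (1/(N₀N₁))·Σ_{u∈S_{1−t}} k(F⁽ᵏ⁻¹⁾_u,F⁽ᵏ⁻¹⁾_i)·F⁽ᵏ⁻¹⁾_u
       + ((1/N_t²)·Σ_{u∈S_t} k(...) − (1/(N₀N₁))·Σ_{u∈S_{1−t}} k(...))·F⁽ᵏ⁻¹⁾_i`. -/
def FairMP {V : Type*} [Fintype V] {d : ℕ} (α : ℝ) (grp : V → Bool)
    (Nb : V → Finset V) (X : V → EuclideanSpace ℝ (Fin d))
    (F : ℕ → V → EuclideanSpace ℝ (Fin d)) : Prop :=
  F 0 = X ∧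
  ∀ k : ℕ, 1 ≤ k → ∀ i : V,
    F k i = X i + (((Nb i).card : ℝ)⁻¹) • ∑ u ∈ Nb i, F (k-1) u
      - (1 / ((sgrp grp (grp i)).card : ℝ) ^ 2) •
          ∑ u ∈ sgrp grp (grp i), ker α (F (k-1) u) (F (k-1) i) • F (k-1) u
      + (1 / (((sgrp grp false).card : ℝ) * ((sgrp grp true).card : ℝ))) •
          ∑ u ∈ sgrp grp (!grp i), ker α (F (k-1) u) (F (k-1) i) • F (k-1) u
      + ((1 / ((sgrp grp (grp i)).card : ℝ) ^ 2) *
            ∑ u ∈ sgrp grp (grp i), ker α (F (k-1) u) (F (k-1) i)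
         - (1 / (((sgrp grp false).card : ℝ) * ((sgrp grp true).card : ℝ))) *
            ∑ u ∈ sgrp grp (!grp i), ker α (F (k-1) u) (F (k-1) i)) • F (k-1) i

/-- Componentwise maximal deviation of the rows of `F` from the overall mean row:
`(dev F)_m = max_{i∈V} |F_{i,m} − (1/N)·Σ_{j∈V} F_{j,m}|`. -/
noncomputable def dev {V : Type*} [Fintype V] {d : ℕ}
    (F : V → EuclideanSpace ℝ (Fin d)) : EuclideanSpace ℝ (Fin d) :=
  WithLp.toLp 2 (fun m => ⨆ i : V, |F i m - (1 / (Fintype.card V : ℝ)) * ∑ j : V, F j m|)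

/-!
Fix a coordinate and write `Δ` for the deviation of layer `k`. Layer `k + 1` is `X` plus the
neighbourhood average of layer `k`, whose values all lie within `Δ` of the old mean (so its own
deviation is at most `2Δ`), plus a fairness correction. The RBF kernel is symmetric, so the
correction sums to zero over `V`: within-group terms cancel in pairs, and the two cross-group
sums cancel each other. The kernel also lies in `(0, 1]`, so at a node of group `S_t` the correction
is at most `4Δ / N_t`. Hence `Δᵏ⁺¹ ≤ Δ⁰ + (2 + 4/N₀ + 4/N₁) Δᵏ` coordinatewise; applying this twice
and comparing Euclidean norms coordinatewise gives the bound.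
-/

theorem abs_avg_sub_le {ι : Type*} {s : Finset ι} (hs : s.Nonempty) {f : ι → ℝ} {c r : ℝ}
    (h : ∀ i ∈ s, |f i - c| ≤ r) : |(#s : ℝ)⁻¹ * ∑ i ∈ s, f i - c| ≤ r := by
  have hcard : (0 : ℝ) < #s := by exact_mod_cast hs.card_pos
  have hcenter : (#s : ℝ)⁻¹ * ∑ i ∈ s, f i - c = (#s : ℝ)⁻¹ * ∑ i ∈ s, (f i - c) := by
    rw [sum_sub_distrib, sum_const, nsmul_eq_mul, mul_sub, inv_mul_cancel_left₀ hcard.ne']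
  rw [hcenter, abs_mul, abs_of_pos (inv_pos.2 hcard), inv_mul_le_iff₀ hcard]
  calc |∑ i ∈ s, (f i - c)| ≤ ∑ i ∈ s, |f i - c| := abs_sum_le_sum_abs (fun i => f i - c) s
    _ ≤ #s • r := sum_le_card_nsmul _ _ _ h
    _ = #s * r := nsmul_eq_mul _ _

section MaxDev

variable {V : Type*} [Fintype V]

noncomputable def maxDev (f : V → ℝ) : ℝ :=
  ⨆ i, |f i - (1 / (Fintype.card V : ℝ)) * ∑ j, f j|

theorem abs_sub_mean_le_maxDev (f : V → ℝ) (i : V) :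
    |f i - (1 / (Fintype.card V : ℝ)) * ∑ j, f j| ≤ maxDev f :=
  le_ciSup (f := fun i => |f i - (1 / (Fintype.card V : ℝ)) * ∑ j, f j|)
    (Set.finite_range _).bddAbove i

theorem maxDev_nonneg (f : V → ℝ) : 0 ≤ maxDev f :=
  Real.iSup_nonneg fun _ => abs_nonneg _

theorem maxDev_le {f : V → ℝ} {r : ℝ} (hr : 0 ≤ r)
    (h : ∀ i, |f i - (1 / (Fintype.card V : ℝ)) * ∑ j, f j| ≤ r) : maxDev f ≤ r :=
  Real.iSup_le h hr

theorem maxDev_add_le (f g : V → ℝ) : maxDev (f + g) ≤ maxDev f + maxDev g := by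
  refine maxDev_le (add_nonneg (maxDev_nonneg f) (maxDev_nonneg g)) fun i => ?_
  have hsplit : (f + g) i - (1 / (Fintype.card V : ℝ)) * ∑ j, (f + g) j =
      (f i - (1 / (Fintype.card V : ℝ)) * ∑ j, f j) +
        (g i - (1 / (Fintype.card V : ℝ)) * ∑ j, g j) := by
    simp only [Pi.add_apply, sum_add_distrib]
    ring
  rw [hsplit]
  exact (abs_add_le _ _).trans
    (add_le_add (abs_sub_mean_le_maxDev f i) (abs_sub_mean_le_maxDev g i))

theorem abs_sub_le_two_mul_maxDev (f : V → ℝ) (u v : V) : |f u - f v| ≤ 2 * maxDev f := by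
  calc |f u - f v| ≤ |f u - (1 / (Fintype.card V : ℝ)) * ∑ j, f j| +
        |(1 / (Fintype.card V : ℝ)) * ∑ j, f j - f v| := abs_sub_le _ _ _
    _ ≤ maxDev f + maxDev f := by
        rw [abs_sub_comm _ (f v)]
        exact add_le_add (abs_sub_mean_le_maxDev f u) (abs_sub_mean_le_maxDev f v)
    _ = 2 * maxDev f := by ring

theorem maxDev_le_of_sum_eq_zero {f : V → ℝ} {r : ℝ} (hsum : ∑ i, f i = 0) (hr : 0 ≤ r)
    (h : ∀ i, |f i| ≤ r) : maxDev f ≤ r :=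
  maxDev_le hr fun i => by simpa [hsum] using h i

theorem maxDev_le_two_mul_of_abs_sub_le {f : V → ℝ} {c r : ℝ}
    (hr : 0 ≤ r) (h : ∀ i, |f i - c| ≤ r) : maxDev f ≤ 2 * r := by
  refine maxDev_le (by positivity) fun i => ?_
  have hmean : |(1 / (Fintype.card V : ℝ)) * ∑ j, f j - c| ≤ r := by
    simpa [← card_univ] using abs_avg_sub_le (univ_nonempty_iff.2 ⟨i⟩) fun j _ => h j
  have htri := abs_sub_le (f i) c ((1 / (Fintype.card V : ℝ)) * ∑ j, f j)
  rw [abs_sub_comm c] at htri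
  linarith [h i]

theorem dev_apply {d : ℕ} (G : V → EuclideanSpace ℝ (Fin d)) (m : Fin d) :
    dev G m = maxDev fun i => G i m :=
  rfl

theorem dev_nonneg {d : ℕ} (G : V → EuclideanSpace ℝ (Fin d)) (m : Fin d) : 0 ≤ dev G m :=
  maxDev_nonneg _

end MaxDev

theorem EuclideanSpace.norm_le_norm_of_abs_le {ι : Type*} [Fintype ι]
    {x y : EuclideanSpace ℝ ι} (h : ∀ m, |x m| ≤ |y m|) : ‖x‖ ≤ ‖y‖ := by
  rw [EuclideanSpace.norm_eq, EuclideanSpace.norm_eq]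
  gcongr with m
  exact h m

theorem sum_sum_mul_sub_add_sum_sum_mul_sub_eq_zero {ι : Type*} (s t : Finset ι)
    {κ : ι → ι → ℝ} (hκ : ∀ u i, κ u i = κ i u) (g : ι → ℝ) :
    ∑ i ∈ s, ∑ u ∈ t, κ u i * (g u - g i) + ∑ i ∈ t, ∑ u ∈ s, κ u i * (g u - g i) = 0 := by
  rw [sum_comm (s := t), ← sum_add_distrib]
  refine sum_eq_zero fun i _ => ?_
  rw [← sum_add_distrib]
  refine sum_eq_zero fun u _ => ?_
  rw [hκ u i]
  ring

theorem sum_sum_mul_sub_eq_zero {ι : Type*} (s : Finset ι)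
    {κ : ι → ι → ℝ} (hκ : ∀ u i, κ u i = κ i u) (g : ι → ℝ) :
    ∑ i ∈ s, ∑ u ∈ s, κ u i * (g u - g i) = 0 :=
  add_self_eq_zero.1 (sum_sum_mul_sub_add_sum_sum_mul_sub_eq_zero s s hκ g)

theorem one_div_mul_mul_le_div {a b r : ℝ} (ha : 0 ≤ a) (hr : 0 ≤ r) :
    1 / (a * b) * (b * r) ≤ r / a :=
  calc 1 / (a * b) * (b * r) = r / a * (b / b) := by ring
    _ ≤ r / a * 1 := mul_le_mul_of_nonneg_left (div_self_le_one b) (div_nonneg hr ha)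
    _ = r / a := mul_one _

section FairCorrection

variable {V : Type*} [Fintype V] (grp : V → Bool)

theorem sum_sgrp_false_add_sum_sgrp_true (f : V → ℝ) :
    ∑ i ∈ sgrp grp false, f i + ∑ i ∈ sgrp grp true, f i = ∑ i, f i := by
  simpa [sgrp] using sum_filter_add_sum_filter_not univ (fun i => grp i = false) f

/-- The last three summands of the `FairMP` update, read in one coordinate `g` with kernel
weights `κ` and regrouped as weighted differences `g u - g i`. -/
noncomputable def fairCorrection (κ : V → V → ℝ) (g : V → ℝ) (i : V) : ℝ :=
  1 / ((#(sgrp grp false) : ℝ) * #(sgrp grp true)) *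
      ∑ u ∈ sgrp grp (!grp i), κ u i * (g u - g i)
    - 1 / (#(sgrp grp (grp i)) : ℝ) ^ 2 * ∑ u ∈ sgrp grp (grp i), κ u i * (g u - g i)

variable {grp}

theorem sum_fairCorrection_eq_zero {κ : V → V → ℝ} (hκ : ∀ u i, κ u i = κ i u) (g : V → ℝ) :
    ∑ i, fairCorrection grp κ g i = 0 := by
  have hgroup : ∀ b, ∑ i ∈ sgrp grp b, fairCorrection grp κ g i =
      1 / ((#(sgrp grp false) : ℝ) * #(sgrp grp true)) *
          ∑ i ∈ sgrp grp b, ∑ u ∈ sgrp grp (!b), κ u i * (g u - g i)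
        - 1 / (#(sgrp grp b) : ℝ) ^ 2 *
          ∑ i ∈ sgrp grp b, ∑ u ∈ sgrp grp b, κ u i * (g u - g i) := by
    intro b
    rw [mul_sum, mul_sum, ← sum_sub_distrib]
    refine sum_congr rfl fun i hi => ?_
    rw [fairCorrection, show grp i = b from (mem_filter.1 hi).2]
  rw [← sum_sgrp_false_add_sum_sgrp_true, hgroup, hgroup, sum_sum_mul_sub_eq_zero _ hκ,
    sum_sum_mul_sub_eq_zero _ hκ, Bool.not_false, Bool.not_true]
  linear_combination (1 / ((#(sgrp grp false) : ℝ) * #(sgrp grp true))) *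
    sum_sum_mul_sub_add_sum_sum_mul_sub_eq_zero (sgrp grp false) (sgrp grp true) hκ g

theorem abs_fairCorrection_le {κ : V → V → ℝ} (hκ₀ : ∀ u i, 0 ≤ κ u i) (hκ₁ : ∀ u i, κ u i ≤ 1)
    {g : V → ℝ} {r : ℝ} (hg : ∀ u v, |g u - g v| ≤ r) (i : V) :
    |fairCorrection grp κ g i| ≤ 2 * r / #(sgrp grp (grp i)) := by
  have hr : 0 ≤ r := by simpa using hg i i
  have hsum : ∀ s : Finset V, |∑ u ∈ s, κ u i * (g u - g i)| ≤ #s * r := fun s =>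
    calc |∑ u ∈ s, κ u i * (g u - g i)| ≤ ∑ u ∈ s, |κ u i * (g u - g i)| :=
          abs_sum_le_sum_abs _ _
      _ ≤ #s • r := sum_le_card_nsmul _ _ _ fun u _ => by
          rw [abs_mul, abs_of_nonneg (hκ₀ u i)]
          exact (mul_le_of_le_one_left (abs_nonneg _) (hκ₁ u i)).trans (hg u i)
      _ = #s * r := nsmul_eq_mul _ _
  have hcross : 1 / ((#(sgrp grp false) : ℝ) * #(sgrp grp true)) * (#(sgrp grp (!grp i)) * r)
      ≤ r / #(sgrp grp (grp i)) := by
    cases grp i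
    · exact one_div_mul_mul_le_div (Nat.cast_nonneg _) hr
    · rw [mul_comm (#(sgrp grp false) : ℝ)]
      exact one_div_mul_mul_le_div (Nat.cast_nonneg _) hr
  have hwithin : 1 / (#(sgrp grp (grp i)) : ℝ) ^ 2 * (#(sgrp grp (grp i)) * r)
      ≤ r / #(sgrp grp (grp i)) := by
    rw [sq]
    exact one_div_mul_mul_le_div (Nat.cast_nonneg _) hr
  have hterm : ∀ (c : ℝ) (s : Finset V), 0 ≤ c →
      |c * ∑ u ∈ s, κ u i * (g u - g i)| ≤ c * (#s * r) := fun c s hc => by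
    rw [abs_mul, abs_of_nonneg hc]
    exact mul_le_mul_of_nonneg_left (hsum s) hc
  have htwo : 2 * r / #(sgrp grp (grp i)) = r / #(sgrp grp (grp i)) + r / #(sgrp grp (grp i)) := by
    ring
  rw [fairCorrection]
  linarith [(abs_sub _ _).trans (add_le_add
    (hterm (1 / ((#(sgrp grp false) : ℝ) * #(sgrp grp true))) (sgrp grp (!grp i)) (by positivity))
    (hterm (1 / (#(sgrp grp (grp i)) : ℝ) ^ 2) (sgrp grp (grp i)) (by positivity)))]

end FairCorrection

section FairMessagePassing

variable {V : Type*} [Fintype V] {d : ℕ} {α : ℝ}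

theorem ker_comm (α : ℝ) (x y : EuclideanSpace ℝ (Fin d)) : ker α x y = ker α y x := by
  rw [ker, ker, norm_sub_rev]

theorem ker_pos (α : ℝ) (x y : EuclideanSpace ℝ (Fin d)) : 0 < ker α x y :=
  Real.exp_pos _

theorem ker_le_one (hα : 0 ≤ α) (x y : EuclideanSpace ℝ (Fin d)) : ker α x y ≤ 1 :=
  Real.exp_le_one_iff.2 (by nlinarith [sq_nonneg ‖x - y‖])

theorem FairMP.apply_succ {grp : V → Bool} {Nb : V → Finset V} {X : V → EuclideanSpace ℝ (Fin d)}
    {F : ℕ → V → EuclideanSpace ℝ (Fin d)} (hF : FairMP α grp Nb X F) (k : ℕ) (i : V)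
    (m : Fin d) :
    F (k + 1) i m = X i m + (#(Nb i) : ℝ)⁻¹ * ∑ u ∈ Nb i, F k u m +
      fairCorrection grp (fun u v => ker α (F k u) (F k v)) (fun u => F k u m) i := by
  rw [hF.2 (k + 1) (Nat.le_add_left 1 k) i, Nat.add_sub_cancel, fairCorrection]
  simp only [PiLp.add_apply, PiLp.sub_apply, PiLp.smul_apply, WithLp.ofLp_sum, Finset.sum_apply,
    smul_eq_mul, mul_sub, sub_mul, sum_sub_distrib, ← sum_mul]
  ring

theorem dev_fairMP_succ_le {grp : V → Bool} {Nb : V → Finset V} {X : V → EuclideanSpace ℝ (Fin d)}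
    {F : ℕ → V → EuclideanSpace ℝ (Fin d)} (hα : 0 ≤ α) (hNb : ∀ i, (Nb i).Nonempty)
    (hF : FairMP α grp Nb X F) (k : ℕ) (m : Fin d) :
    dev (F (k + 1)) m ≤ dev (F 0) m +
      (2 + 4 / (#(sgrp grp false) : ℝ) + 4 / (#(sgrp grp true) : ℝ)) * dev (F k) m := by
  set Δ := dev (F k) m
  have hΔ : 0 ≤ Δ := dev_nonneg _ _
  have hX : maxDev (fun i => X i m) = dev (F 0) m := by rw [hF.1]; rfl
  have hA : maxDev (fun i => (#(Nb i) : ℝ)⁻¹ * ∑ u ∈ Nb i, F k u m) ≤ 2 * Δ :=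
    maxDev_le_two_mul_of_abs_sub_le hΔ fun i =>
      abs_avg_sub_le (hNb i) fun u _ => abs_sub_mean_le_maxDev (fun u => F k u m) u
  have hB : maxDev (fairCorrection grp (fun u v => ker α (F k u) (F k v)) (fun u => F k u m))
      ≤ (4 / (#(sgrp grp false) : ℝ) + 4 / (#(sgrp grp true) : ℝ)) * Δ := by
    refine maxDev_le_of_sum_eq_zero (sum_fairCorrection_eq_zero (fun u v => ker_comm α _ _) _)
      (by positivity) fun i => (abs_fairCorrection_le (fun u v => (ker_pos α _ _).le)
        (fun u v => ker_le_one hα _ _) (abs_sub_le_two_mul_maxDev _) i).trans ?_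
    change 2 * (2 * Δ) / _ ≤ _
    have h₀ : 0 ≤ 4 / (#(sgrp grp false) : ℝ) * Δ := by positivity
    have h₁ : 0 ≤ 4 / (#(sgrp grp true) : ℝ) * Δ := by positivity
    cases grp i
    · linarith [show 2 * (2 * Δ) / (#(sgrp grp false) : ℝ) = 4 / #(sgrp grp false) * Δ by ring]
    · linarith [show 2 * (2 * Δ) / (#(sgrp grp true) : ℝ) = 4 / #(sgrp grp true) * Δ by ring]
  have hsplit : (fun i => F (k + 1) i m) = (fun i => X i m) +
      (fun i => (#(Nb i) : ℝ)⁻¹ * ∑ u ∈ Nb i, F k u m) +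
      fairCorrection grp (fun u v => ker α (F k u) (F k v)) (fun u => F k u m) :=
    funext fun i => hF.apply_succ k i m
  rw [dev_apply, hsplit]
  linarith [maxDev_add_le ((fun i => X i m) + fun i => (#(Nb i) : ℝ)⁻¹ * ∑ u ∈ Nb i, F k u m)
      (fairCorrection grp (fun u v => ker α (F k u) (F k v)) (fun u => F k u m)),
    maxDev_add_le (fun i => X i m) fun i => (#(Nb i) : ℝ)⁻¹ * ∑ u ∈ Nb i, F k u m]

end FairMessagePassing

theorem stmt10_general {V : Type*} [Fintype V] {d : ℕ} {α : ℝ} (hα : 0 < α)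
    (grp : V → Bool) (N₀ N₁ : ℕ)
    (hcard0 : (sgrp grp false).card = N₀) (hcard1 : (sgrp grp true).card = N₁)
    (Nb : V → Finset V) (hNb : ∀ i, (Nb i).Nonempty)
    (X : V → EuclideanSpace ℝ (Fin d)) (F : ℕ → V → EuclideanSpace ℝ (Fin d))
    (hF : FairMP α grp Nb X F) :
    ‖dev (F 2)‖ ≤
      ((2 + 4 / (N₀ : ℝ) + 4 / (N₁ : ℝ)) ^ 2 + 6 + 8 / (N₀ : ℝ) + 8 / (N₁ : ℝ)) * ‖dev (F 0)‖ := by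
  have hstep := dev_fairMP_succ_le hα.le hNb hF
  rw [hcard0, hcard1] at hstep
  have hc : 0 ≤ 4 / (N₀ : ℝ) + 4 / (N₁ : ℝ) := by positivity
  set C := (2 + 4 / (N₀ : ℝ) + 4 / (N₁ : ℝ)) ^ 2 + 6 + 8 / (N₀ : ℝ) + 8 / (N₁ : ℝ) with hC
  have hcoord : ∀ m, |dev (F 2) m| ≤ |(C • dev (F 0)) m| := fun m => by
    have h₀ := dev_nonneg (F 0) m
    have h₁ : dev (F 1) m ≤ dev (F 0) m + (2 + 4 / (N₀ : ℝ) + 4 / (N₁ : ℝ)) * dev (F 0) m :=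
      hstep 0 m
    have h₂ : dev (F 2) m ≤ dev (F 0) m + (2 + 4 / (N₀ : ℝ) + 4 / (N₁ : ℝ)) * dev (F 1) m :=
      hstep 1 m
    rw [PiLp.smul_apply, smul_eq_mul, abs_of_nonneg (dev_nonneg _ _), abs_of_nonneg (by positivity),
      hC]
    -- two steps give the sharper factor `7 + 5c + c²`, with `c = 4/N₀ + 4/N₁`
    linear_combination h₂ + 3 * h₀ + mul_nonneg hc h₀ +
      mul_le_mul_of_nonneg_left h₁ (by positivity : (0 : ℝ) ≤ 2 + 4 / N₀ + 4 / N₁)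
  calc ‖dev (F 2)‖ ≤ ‖C • dev (F 0)‖ := EuclideanSpace.norm_le_norm_of_abs_le hcoord
    _ = C * ‖dev (F 0)‖ := by rw [norm_smul, Real.norm_of_nonneg (by positivity)]

/-- `‖Δ²‖ ≤ ((2 + 4/N₀ + 4/N₁)² + 6 + 8/N₀ + 8/N₁)·‖Δ⁰‖`. -/
theorem stmt10 {V : Type*} [Fintype V] {d : ℕ} {α : ℝ} (hα : 0 < α)
    (grp : V → Bool) (N₀ N₁ : ℕ)
    (hcard0 : (sgrp grp false).card = N₀) (hcard1 : (sgrp grp true).card = N₁)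
    (hN₀ : 1 ≤ N₀) (hN₁ : 1 ≤ N₁)
    (Nb : V → Finset V) (hNb : ∀ i, (Nb i).Nonempty)
    (X : V → EuclideanSpace ℝ (Fin d)) (F : ℕ → V → EuclideanSpace ℝ (Fin d))
    (hF : FairMP α grp Nb X F) :
    ‖dev (F 2)‖ ≤
      ((2 + 4 / (N₀ : ℝ) + 4 / (N₁ : ℝ)) ^ 2 + 6 + 8 / (N₀ : ℝ) + 8 / (N₁ : ℝ)) * ‖dev (F 0)‖ :=
  stmt10_general hα grp N₀ N₁ hcard0 hcard1 Nb hNb X F hF
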